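/- The 8×5 array over mixed alphabet {0,1,2,3} (first column) and {0,1} (remaining four columns) with rows (0,0,0,0,0), (0,1,1,1,1), (1,0,0,1,1), (1,1,1,0,0), (2,0,1,0,1), (2,1,0,1,0), (3,0,1,1,0), (3,1,0,0,1) is a mixed orthogonal array of strength 2 whose minimum Hamming distance is 3; hence it is an irredundant MOA(8, 4^1 2^4, 2). -/

import Mathlib

open Finset

/-- `M` is a mixed orthogonal array of strength `k`. -/
def IsMOA {r : ℕ} {ι : Type} [Fintype ι] [DecidableEq ι]
    (d : ι → ℕ) (k : ℕ) (M : Fin r → ∀ j, Fin (d j)) : Prop :=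
  ∀ (cols : Fin k ↪ ι) (t t' : ∀ s, Fin (d (cols s))),
    (univ.filter fun x => ∀ s, M x (cols s) = t s).card =
    (univ.filter fun x => ∀ s, M x (cols s) = t' s).card

/-- `M` is irredundant. -/
def IsIrredundant {r : ℕ} {ι : Type} [Fintype ι] [DecidableEq ι]
    (d : ι → ℕ) (k : ℕ) (M : Fin r → ∀ j, Fin (d j)) : Prop :=
  ∀ S : Finset ι, S.card = k → ∀ x y : Fin r, x ≠ y → ∃ j ∉ S, M x j ≠ M y j

/-- Alphabet sizes: first column `{0,1,2,3}`, remaining columns `{0,1}`. -/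
def D12 : Fin 5 → ℕ := fun i => if i = 0 then 4 else 2

/-- The raw entries of the array. -/
def vals12 : Fin 8 → Fin 5 → ℕ :=
  ![![0,0,0,0,0], ![0,1,1,1,1], ![1,0,0,1,1], ![1,1,1,0,0],
    ![2,0,1,0,1], ![2,1,0,1,0], ![3,0,1,1,0], ![3,1,0,0,1]]

/-- The 8×5 mixed array. -/
def M12 : Fin 8 → ∀ j, Fin (D12 j) :=
  fun i j => ⟨vals12 i j, by revert i j; decide⟩

theorem isMOA_two_of_card_filter_pair_eq {r : ℕ} {ι : Type} [Fintype ι] [DecidableEq ι]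
    {d : ι → ℕ} {M : Fin r → ∀ j, Fin (d j)} (c : ι → ι → ℕ)
    (hc : ∀ i j, i ≠ j → ∀ (a : Fin (d i)) (b : Fin (d j)),
      #(univ.filter fun x => M x i = a ∧ M x j = b) = c i j) :
    IsMOA d 2 M := by
  intro cols t t'
  have hne : cols 0 ≠ cols 1 := cols.injective.ne (by decide)
  simp only [Fin.forall_fin_two]
  rw [hc _ _ hne, hc _ _ hne]

/-- Rows that agree outside `S` differ in at most `#S = k` places. -/
theorem isIrredundant_of_lt_hammingDist {r : ℕ} {ι : Type} [Fintype ι] [DecidableEq ι]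
    {d : ι → ℕ} {k : ℕ} {M : Fin r → ∀ j, Fin (d j)}
    (hM : ∀ x y : Fin r, x ≠ y → k < hammingDist (M x) (M y)) :
    IsIrredundant d k M := by
  intro S hS x y hxy
  by_contra! hagree
  have hsub : (univ.filter fun j => M x j ≠ M y j) ⊆ S := fun j hj => by
    by_contra hjS
    exact (mem_filter.mp hj).2 (hagree j hjS)
  have hlt := hM x y hxy
  have hle := card_le_card hsub
  rw [hammingDist] at hlt
  omega

theorem M12_card_filter_pair_eq : ∀ i j, i ≠ j → ∀ (a : Fin (D12 i)) (b : Fin (D12 j)),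
    #(univ.filter fun x => M12 x i = a ∧ M12 x j = b) = 8 / (D12 i * D12 j) := by
  decide

theorem M12_three_le_hammingDist :
    ∀ x y : Fin 8, x ≠ y → 3 ≤ hammingDist (M12 x) (M12 y) := by
  decide

/-- The given 8×5 array is a mixed orthogonal array `MOA(8, 4¹2⁴, 2)` with
minimum Hamming distance 3, hence irredundant. -/
theorem moa_8_4_2222_irredundant :
    IsMOA D12 2 M12 ∧
    (∀ x y : Fin 8, x ≠ y → 3 ≤ hammingDist (M12 x) (M12 y)) ∧
    (∃ x y : Fin 8, x ≠ y ∧ hammingDist (M12 x) (M12 y) = 3) ∧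
    IsIrredundant D12 2 M12 := by
  refine ⟨isMOA_two_of_card_filter_pair_eq _ M12_card_filter_pair_eq, M12_three_le_hammingDist,
    ⟨0, 2, by decide, by decide⟩, isIrredundant_of_lt_hammingDist M12_three_le_hammingDist⟩
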